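/- Let β, β' be upper λ-tuples. If Δ_λ(β) = Δ_λ(β') (they have the same λ-core, equivalently the same critical list), then S_λ(β) = S_λ(β'); in particular S_λ(β) = S_λ(Δ_λ(β)) and hence s_λ(β;x) = s_λ(Δ_λ(β);x). -/
import Mathlib


open Finset

/-- End of the carrel containing `i`: the least `q ≥ i` with `q ∈ R` or `q = n`. -/
noncomputable def carrelEnd (R : Finset ℕ) (n i : ℕ) : ℕ := sInf {q | i ≤ q ∧ (q ∈ R ∨ q = n)}

/-- `x` is a critical index of the upper `R`-tuple `β`:
`β x - x < β j - j` for every `j` with `x < j ≤ carrelEnd R n x`. -/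
def IsCritical (R : Finset ℕ) (n : ℕ) (β : ℕ → ℕ) (x : ℕ) : Prop :=
  1 ≤ x ∧ x ≤ n ∧ ∀ j, x < j → j ≤ carrelEnd R n x → β x + j < β j + x

/-- The least critical index `≥ i`: the right end of the block of `i`. -/
noncomputable def blockEnd (R : Finset ℕ) (n : ℕ) (β : ℕ → ℕ) (i : ℕ) : ℕ :=
  sInf {x | i ≤ x ∧ IsCritical R n β x}

/-- The `R`-core map `Δ_R`. -/
noncomputable def coreT (R : Finset ℕ) (n : ℕ) (β : ℕ → ℕ) (i : ℕ) : ℕ :=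
  if 1 ≤ i ∧ i ≤ n then β (blockEnd R n β i) - (blockEnd R n β i - i) else 0

/-- The `R`-platform map `Ξ_R`. -/
noncomputable def platformT (R : Finset ℕ) (n : ℕ) (β : ℕ → ℕ) (i : ℕ) : ℕ :=
  if 1 ≤ i ∧ i ≤ n then β (blockEnd R n β i) else 0

/-- An upper tuple: entries in `[n]` with `β i ≥ i` on `[1, n]`. -/
def UpperTuple (n : ℕ) (β : ℕ → ℕ) : Prop := ∀ i, 1 ≤ i → i ≤ n → i ≤ β i ∧ β i ≤ n

/-- `R ⊆ [n-1]`. -/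
def ValidR (n : ℕ) (R : Finset ℕ) : Prop := ∀ q ∈ R, 1 ≤ q ∧ q < n

/-- An `R`-increasing tuple: strictly increasing within each carrel. -/
def RIncreasing (n : ℕ) (R : Finset ℕ) (β : ℕ → ℕ) : Prop :=
  ∀ i, 1 ≤ i → i < n → i ∉ R → β i < β (i + 1)

/-- The critical list of `β` is a flag critical list: the rightmost critical entry `β q`
of each non-final carrel is at most the leftmost critical entry of the next carrel. -/
def FlagCriticalList (R : Finset ℕ) (n : ℕ) (β : ℕ → ℕ) : Prop :=
  ∀ q ∈ R, β q ≤ β (blockEnd R n β (q + 1))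

/-- Normalization: entries outside `[1, n]` vanish. -/
def NormalizedT (n : ℕ) (β : ℕ → ℕ) : Prop := ∀ i, i = 0 ∨ n < i → β i = 0

/-- An `R`-ceiling flag: an upper flag that is a concatenation of plateaus whose
rightmost pairs are exactly its `R`-critical pairs. -/
def IsCeilingFlag (R : Finset ℕ) (n : ℕ) (ξ : ℕ → ℕ) : Prop :=
  UpperTuple n ξ ∧ (∀ i, 1 ≤ i → i < n → ξ i ≤ ξ (i + 1)) ∧
  (∀ i, 1 ≤ i → i ≤ n → (IsCritical R n ξ i ↔ (i = n ∨ i ∈ R ∨ ξ i ≠ ξ (i + 1))))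

/-- `lam` (on indices `1, ..., n`) is a partition. -/
def IsPartition (n : ℕ) (lam : ℕ → ℕ) : Prop := ∀ i, 1 ≤ i → i < n → lam (i + 1) ≤ lam i

/-- `R_λ`: the set of column lengths of the shape `λ` that are less than `n`. -/
def Rlam (n : ℕ) (lam : ℕ → ℕ) : Finset ℕ :=
  ((Finset.Icc 1 (lam 1)).image fun j => ((Finset.Icc 1 n).filter fun i => j ≤ lam i).card).filter
    (· < n)

/-- A semistandard tableau of shape `lam` with values in `[n]`:
`T i j` is the value in row `i`, column `j`. -/
def IsSSYT (n : ℕ) (lam : ℕ → ℕ) (T : ℕ → ℕ → ℕ) : Prop :=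
  (∀ i j, 1 ≤ i → i ≤ n → 1 ≤ j → j ≤ lam i → 1 ≤ T i j ∧ T i j ≤ n) ∧
  (∀ i j, 1 ≤ i → i ≤ n → 1 ≤ j → j + 1 ≤ lam i → T i j ≤ T i (j + 1)) ∧
  (∀ i j, 1 ≤ i → i + 1 ≤ n → 1 ≤ j → j ≤ lam (i + 1) → T i j < T (i + 1) j)

/-- Every entry in row `i` is at most `β i`. -/
def RowBound (n : ℕ) (lam β : ℕ → ℕ) (T : ℕ → ℕ → ℕ) : Prop :=
  ∀ i j, 1 ≤ i → i ≤ n → 1 ≤ j → j ≤ lam i → T i j ≤ β i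

/-- Normalization: values outside the shape vanish. -/
def NormalizedTab (n : ℕ) (lam : ℕ → ℕ) (T : ℕ → ℕ → ℕ) : Prop :=
  ∀ i j, ¬(1 ≤ i ∧ i ≤ n ∧ 1 ≤ j ∧ j ≤ lam i) → T i j = 0

/-- Extended depth function of a lattice path with source depth `b`, sink depth `d`,
and `u` easterly steps of depths `t 1, ..., t u`. -/
def extDepth (b d u : ℕ) (t : ℕ → ℕ) (j : ℕ) : ℕ :=
  if j = 0 then b else if j ≤ u then t j else d

/-- `t` encodes a monotone lattice path from `(a, b)` to `(a + u, d)`: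
the extended depths weakly increase. -/
def ValidPath (b d u : ℕ) (t : ℕ → ℕ) : Prop :=
  ∀ j, j ≤ u → extDepth b d u t j ≤ extDepth b d u t (j + 1)

/-- The lattice point `p` lies on the path from `(a, b)` to `(a + u, d)` encoded by `t`. -/
def OnPath (a b d u : ℕ) (t : ℕ → ℕ) (p : ℕ × ℕ) : Prop :=
  ∃ j, j ≤ u ∧ p.1 = a + j ∧ extDepth b d u t j ≤ p.2 ∧ p.2 ≤ extDepth b d u t (j + 1)

/-- The terminal pair `(λ, β)` is nonpermutable: for every nontrivial permutation `π`
of `[n]`, there is no pairwise disjoint `n`-tuple of lattice paths in which the `m`-th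
path goes from source `(n - m, m)` to sink `(λ (π m) + n - π m, β (π m))`. -/
def Nonpermutable (n : ℕ) (lam β : ℕ → ℕ) : Prop :=
  ∀ π : ℕ → ℕ, Set.BijOn π (Set.Icc 1 n) (Set.Icc 1 n) →
    (∃ m, 1 ≤ m ∧ m ≤ n ∧ π m ≠ m) →
    ¬∃ (u : ℕ → ℕ) (L : ℕ → ℕ → ℕ),
      (∀ m, 1 ≤ m → m ≤ n → n - m + u m = lam (π m) + (n - π m) ∧
        ValidPath m (β (π m)) (u m) (L m)) ∧
      (∀ m m', 1 ≤ m → m ≤ n → 1 ≤ m' → m' ≤ n → m ≠ m' →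
        ¬∃ p : ℕ × ℕ, OnPath (n - m) m (β (π m)) (u m) (L m) p ∧
          OnPath (n - m') m' (β (π m')) (u m') (L m') p)

open Classical in
/-- The complete homogeneous symmetric polynomial `h_u(i, k; x)` of degree `u`
in the variables `X i, ..., X k`. -/
noncomputable def hpoly (u i k : ℕ) : MvPolynomial ℕ ℤ :=
  ∑ t ∈ Finset.univ.filter
      (fun t : Fin u → Fin (k + 1) => (∀ a, i ≤ (t a : ℕ)) ∧ Monotone fun a => (t a : ℕ)),
    ∏ a, MvPolynomial.X ((t a : ℕ))

/-- `h_d(i, k; x)` for an integer degree `d`, vanishing when `d < 0`. -/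
noncomputable def hz (d : ℤ) (i k : ℕ) : MvPolynomial ℕ ℤ :=
  if 0 ≤ d then hpoly d.toNat i k else 0

/-- The content weight monomial `x^{Θ(T)}` of a tableau of shape `lam`. -/
noncomputable def tabWeight (n : ℕ) (lam : ℕ → ℕ) (T : ℕ → ℕ → ℕ) : MvPolynomial ℕ ℤ :=
  ∏ i ∈ Finset.Icc 1 n, ∏ j ∈ Finset.Icc 1 (lam i), MvPolynomial.X (T i j)

/-- The row bound sum `s_λ(β; x)`: sum of `x^{Θ(T)}` over `T ∈ S_λ(β)`. -/
noncomputable def rowBoundSum (n : ℕ) (lam β : ℕ → ℕ) : MvPolynomial ℕ ℤ :=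
  ∑ᶠ T ∈ {T : ℕ → ℕ → ℕ |
      IsSSYT n lam T ∧ RowBound n lam β T ∧ NormalizedTab n lam T}, tabWeight n lam T

/-- The Gessel–Viennot matrix, with `(i, j)` entry `h_{λ_j - j + i}(i, β_j; x)`
(here `i, j` are `0`-based, so the `1`-based indices are `i+1, j+1`). -/
noncomputable def gvMatrix (n : ℕ) (lam β : ℕ → ℕ) :
    Matrix (Fin n) (Fin n) (MvPolynomial ℕ ℤ) :=
  Matrix.of fun i j =>
    hz ((lam (j.1 + 1) : ℤ) - (j.1 + 1) + (i.1 + 1)) (i.1 + 1) (β (j.1 + 1))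

/-- The number of monomials of `h_d(i, k; x)`:
`0` for negative degree, `1` for degree zero, else `C(k - i + d, d)` (0 if `k < i`). -/
def monCount (d : ℤ) (i k : ℕ) : ℕ :=
  if d < 0 then 0 else if d = 0 then 1
  else if k < i then 0 else (k - i + d.toNat).choose d.toNat
section Aux

variable (R : Finset ℕ) (n : ℕ) (β : ℕ → ℕ)

lemma carrelEnd_mem (i : ℕ) (hi : i ≤ n) :
    i ≤ carrelEnd R n i ∧ (carrelEnd R n i ∈ R ∨ carrelEnd R n i = n) :=
  Nat.sInf_mem (⟨n, hi, Or.inr rfl⟩ : {q | i ≤ q ∧ (q ∈ R ∨ q = n)}.Nonempty)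

lemma carrelEnd_le {i q : ℕ} (hq : i ≤ q) (hq2 : q ∈ R ∨ q = n) : carrelEnd R n i ≤ q :=
  Nat.sInf_le ⟨hq, hq2⟩

lemma carrelEnd_le_n {i : ℕ} (hi : i ≤ n) : carrelEnd R n i ≤ n :=
  carrelEnd_le R n hi (Or.inr rfl)

lemma not_mem_R_of_lt_carrelEnd {i m : ℕ} (him : i ≤ m) (hm : m < carrelEnd R n i) :
    m ∉ R ∧ m ≠ n := by
  constructor
  · intro hmem
    exact absurd (carrelEnd_le R n him (Or.inl hmem)) (not_le.mpr hm)
  · intro hmem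
    exact absurd (carrelEnd_le R n him (Or.inr hmem)) (not_le.mpr hm)

lemma carrelEnd_eq_of_le {i j : ℕ} (hi : i ≤ n) (hij : i ≤ j) (hj : j ≤ carrelEnd R n i) :
    carrelEnd R n j = carrelEnd R n i := by
  obtain ⟨h1, h2⟩ := carrelEnd_mem R n i hi
  apply le_antisymm
  · exact carrelEnd_le R n hj h2
  · obtain ⟨h3, h4⟩ := carrelEnd_mem R n j (le_trans hj (carrelEnd_le_n R n hi))
    exact carrelEnd_le R n (le_trans hij h3) h4

lemma carrelEnd_critical {i : ℕ} (hi1 : 1 ≤ i) (hi : i ≤ n) :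
    IsCritical R n β (carrelEnd R n i) := by
  obtain ⟨h1, h2⟩ := carrelEnd_mem R n i hi
  refine ⟨le_trans hi1 h1, carrelEnd_le_n R n hi, fun j hj hj2 => ?_⟩
  rw [carrelEnd_eq_of_le R n hi h1 le_rfl] at hj2
  omega

lemma blockEnd_mem {i : ℕ} (hi1 : 1 ≤ i) (hi : i ≤ n) :
    i ≤ blockEnd R n β i ∧ IsCritical R n β (blockEnd R n β i) :=
  Nat.sInf_mem (⟨carrelEnd R n i, (carrelEnd_mem R n i hi).1,
    carrelEnd_critical R n β hi1 hi⟩ :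
      {x | i ≤ x ∧ IsCritical R n β x}.Nonempty)

lemma blockEnd_le {i x : ℕ} (hx : i ≤ x) (hc : IsCritical R n β x) : blockEnd R n β i ≤ x :=
  Nat.sInf_le ⟨hx, hc⟩

lemma blockEnd_le_carrelEnd {i : ℕ} (hi1 : 1 ≤ i) (hi : i ≤ n) :
    blockEnd R n β i ≤ carrelEnd R n i :=
  blockEnd_le R n β (carrelEnd_mem R n i hi).1 (carrelEnd_critical R n β hi1 hi)

lemma blockEnd_min : ∀ k i, n - i ≤ k → 1 ≤ i → i ≤ n →
    β (blockEnd R n β i) + i ≤ β i + blockEnd R n β i := by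
  intro k
  induction k with
  | zero =>
    intro i hk h1 h2
    have h3 := blockEnd_mem R n β h1 h2
    have h4 := blockEnd_le_carrelEnd R n β h1 h2
    have h5 := carrelEnd_le_n R n h2
    have heq : blockEnd R n β i = i := by omega
    rw [heq]
  | succ k ih =>
    intro i hk h1 h2
    obtain ⟨hix, hcx⟩ := blockEnd_mem R n β h1 h2
    by_cases hxi : blockEnd R n β i = i
    · rw [hxi]
    · have hnotcrit : ¬ IsCritical R n β i := fun hc =>
        hxi (le_antisymm (blockEnd_le R n β le_rfl hc) hix)
      have hE := carrelEnd_le_n R n h2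
      have hxE := blockEnd_le_carrelEnd R n β h1 h2
      obtain ⟨j, hj1, hj2, hj3⟩ : ∃ j, i < j ∧ j ≤ carrelEnd R n i ∧ β j + i ≤ β i + j := by
        by_contra hcon
        push_neg at hcon
        exact hnotcrit ⟨h1, h2, fun j hja hjb => by have := hcon j hja hjb; omega⟩
      by_cases hxj : blockEnd R n β i < j
      · have hcE : carrelEnd R n (blockEnd R n β i) = carrelEnd R n i :=
          carrelEnd_eq_of_le R n h2 hix hxE
        have := hcx.2.2 j hxj (by rw [hcE]; exact hj2)
        omega
      · push_neg at hxj
        have hjn : j ≤ n := le_trans hj2 hE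
        have hbj : blockEnd R n β j = blockEnd R n β i := by
          apply le_antisymm (blockEnd_le R n β hxj hcx)
          refine Nat.le_of_not_lt fun hlt => ?_
          obtain ⟨hy1, hy2⟩ := blockEnd_mem R n β (by omega : 1 ≤ j) hjn
          have := blockEnd_le R n β (le_trans (le_of_lt hj1) hy1) hy2
          omega
        have := ih j (by omega) (by omega) hjn
        rw [hbj] at this
        omega

lemma coreT_eq {i : ℕ} (h1 : 1 ≤ i) (h2 : i ≤ n) :
    coreT R n β i = β (blockEnd R n β i) - (blockEnd R n β i - i) := by
  simp [coreT, h1, h2]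

end Aux

section PartAux

variable (n : ℕ) (lam : ℕ → ℕ)

lemma lam_anti (hlam : IsPartition n lam) :
    ∀ b a, 1 ≤ a → a ≤ b → b ≤ n → lam b ≤ lam a := by
  intro b
  induction b with
  | zero => intro a ha hab _; omega
  | succ b ihb =>
    intro a ha hab hbn
    by_cases h : a = b + 1
    · rw [h]
    · have h1 : lam (b + 1) ≤ lam b := hlam b (by omega) (by omega)
      exact le_trans h1 (ihb a ha (by omega) (by omega))

lemma mem_Rlam_of_lt (hlam : IsPartition n lam) {m : ℕ} (h1 : 1 ≤ m) (h2 : m < n)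
    (h3 : lam (m + 1) < lam m) : m ∈ Rlam n lam := by
  have hl1 : lam m ≤ lam 1 := lam_anti n lam hlam m 1 le_rfl h1 (by omega)
  have hcard : ((Finset.Icc 1 n).filter fun i => lam m ≤ lam i) = Finset.Icc 1 m := by
    ext i
    simp only [Finset.mem_filter, Finset.mem_Icc]
    constructor
    · rintro ⟨⟨hi1, hi2⟩, hi3⟩
      refine ⟨hi1, ?_⟩
      by_contra hcon
      push_neg at hcon
      have : lam i ≤ lam (m + 1) := lam_anti n lam hlam i (m + 1) (by omega) hcon hi2
      omega
    · rintro ⟨hi1, hi2⟩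
      exact ⟨⟨hi1, by omega⟩, lam_anti n lam hlam m i hi1 hi2 (by omega)⟩
  have : m ∈ (Finset.Icc 1 (lam 1)).image
      fun j => ((Finset.Icc 1 n).filter fun i => j ≤ lam i).card := by
    refine Finset.mem_image.mpr ⟨lam m, Finset.mem_Icc.mpr ⟨by omega, hl1⟩, ?_⟩
    rw [hcard, Nat.card_Icc]
    omega
  exact Finset.mem_filter.mpr ⟨this, h2⟩

lemma lam_ge_in_carrel (hlam : IsPartition n lam) :
    ∀ m i, 1 ≤ i → i ≤ n → i ≤ m → m ≤ carrelEnd (Rlam n lam) n i → lam i ≤ lam m := by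
  intro m
  induction m with
  | zero => intro i _ _ _ _; omega
  | succ m ihm =>
    intro i h1 h2 h3 h4
    by_cases h : i = m + 1
    · rw [h]
    · have hm1 : i ≤ m := by omega
      have hm2 : m < carrelEnd (Rlam n lam) n i := by omega
      obtain ⟨hR, hne⟩ := not_mem_R_of_lt_carrelEnd (Rlam n lam) n hm1 hm2
      have hmn : m < n := by
        have := carrelEnd_le_n (Rlam n lam) n h2
        omega
      have hstep : lam m ≤ lam (m + 1) := by
        by_contra hcon
        exact hR (mem_Rlam_of_lt n lam hlam (by omega) hmn (by omega))
      have := ihm i h1 h2 hm1 (by omega)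
      omega

lemma col_strict (T : ℕ → ℕ → ℕ) (hT : IsSSYT n lam T) :
    ∀ d i j, 1 ≤ i → i + d ≤ n → 1 ≤ j → (∀ m, i ≤ m → m ≤ i + d → j ≤ lam m) →
      T i j + d ≤ T (i + d) j := by
  intro d
  induction d with
  | zero => intro i j _ _ _ _; simp
  | succ d ihd =>
    intro i j h1 h2 h3 h4
    have hprev := ihd i j h1 (by omega) h3 (fun m hm1 hm2 => h4 m hm1 (by omega))
    have hstep : T (i + d) j < T (i + d + 1) j :=
      hT.2.2 (i + d) j (by omega) (by omega) h3 (h4 (i + d + 1) (by omega) (by omega))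
    have heq : i + (d + 1) = i + d + 1 := by omega
    rw [heq]
    omega

lemma rowBound_iff_core (hlam : IsPartition n lam) (β : ℕ → ℕ) (hβ : UpperTuple n β)
    (T : ℕ → ℕ → ℕ) (hT : IsSSYT n lam T) :
    RowBound n lam β T ↔ RowBound n lam (coreT (Rlam n lam) n β) T := by
  constructor
  · intro h i j h1 h2 hj1 hj2
    obtain ⟨hix, hcx⟩ := blockEnd_mem (Rlam n lam) n β h1 h2
    have hxE : blockEnd (Rlam n lam) n β i ≤ carrelEnd (Rlam n lam) n i :=
      blockEnd_le_carrelEnd (Rlam n lam) n β h1 h2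
    have hEn : carrelEnd (Rlam n lam) n i ≤ n := carrelEnd_le_n (Rlam n lam) n h2
    have hlamm : ∀ m, i ≤ m → m ≤ i + (blockEnd (Rlam n lam) n β i - i) → j ≤ lam m := by
      intro m hm1 hm2
      have : lam i ≤ lam m := lam_ge_in_carrel n lam hlam m i h1 h2 hm1 (by omega)
      omega
    have hcol := col_strict n lam T hT (blockEnd (Rlam n lam) n β i - i) i j h1
      (by omega) hj1 hlamm
    rw [(by omega : i + (blockEnd (Rlam n lam) n β i - i) = blockEnd (Rlam n lam) n β i)]
      at hcol
    have hlamx : lam i ≤ lam (blockEnd (Rlam n lam) n β i) :=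
      lam_ge_in_carrel n lam hlam _ i h1 h2 hix hxE
    have hbx : T (blockEnd (Rlam n lam) n β i) j ≤ β (blockEnd (Rlam n lam) n β i) :=
      h _ j (by omega) (by omega) hj1 (by omega)
    rw [coreT_eq (Rlam n lam) n β h1 h2]
    omega
  · intro h i j h1 h2 hj1 hj2
    have hc := h i j h1 h2 hj1 hj2
    rw [coreT_eq (Rlam n lam) n β h1 h2] at hc
    obtain ⟨hix, hcx⟩ := blockEnd_mem (Rlam n lam) n β h1 h2
    have hmin := blockEnd_min (Rlam n lam) n β n i (by omega) h1 h2
    have hup := (hβ (blockEnd (Rlam n lam) n β i) hcx.1 hcx.2.1).1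
    omega

lemma rowBound_congr (lam γ γ' : ℕ → ℕ) (T : ℕ → ℕ → ℕ)
    (h : ∀ i, 1 ≤ i → i ≤ n → γ i = γ' i) :
    RowBound n lam γ T ↔ RowBound n lam γ' T := by
  constructor <;> intro hb i j h1 h2 hj1 hj2
  · rw [← h i h1 h2]; exact hb i j h1 h2 hj1 hj2
  · rw [h i h1 h2]; exact hb i j h1 h2 hj1 hj2

end PartAux
/-- If `Δ_λ(β) = Δ_λ(β')` then `S_λ(β) = S_λ(β')`; in particular
`S_λ(β) = S_λ(Δ_λ(β))` and `s_λ(β; x) = s_λ(Δ_λ(β); x)`. -/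
theorem stmt16 (n : ℕ) (hn : 1 ≤ n) (lam β β' : ℕ → ℕ) (hlam : IsPartition n lam)
    (hβ : UpperTuple n β) (hβ' : UpperTuple n β')
    (hcore : ∀ i, 1 ≤ i → i ≤ n → coreT (Rlam n lam) n β i = coreT (Rlam n lam) n β' i) :
    ({T | IsSSYT n lam T ∧ RowBound n lam β T} =
        {T | IsSSYT n lam T ∧ RowBound n lam β' T}) ∧
    ({T | IsSSYT n lam T ∧ RowBound n lam β T} =
        {T | IsSSYT n lam T ∧ RowBound n lam (coreT (Rlam n lam) n β) T}) ∧
    rowBoundSum n lam β = rowBoundSum n lam (coreT (Rlam n lam) n β) := by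
  have key : ∀ T, IsSSYT n lam T →
      (RowBound n lam β T ↔ RowBound n lam (coreT (Rlam n lam) n β) T) :=
    fun T hT => rowBound_iff_core n lam hlam β hβ T hT
  have key' : ∀ T, IsSSYT n lam T →
      (RowBound n lam β' T ↔ RowBound n lam (coreT (Rlam n lam) n β) T) := by
    intro T hT
    rw [rowBound_iff_core n lam hlam β' hβ' T hT]
    exact rowBound_congr n lam _ _ T fun i h1 h2 => (hcore i h1 h2).symm
  have h2 : {T | IsSSYT n lam T ∧ RowBound n lam β T} =
      {T | IsSSYT n lam T ∧ RowBound n lam (coreT (Rlam n lam) n β) T} := by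
    ext T
    simp only [Set.mem_setOf_eq]
    exact and_congr_right fun hT => key T hT
  have h1 : {T | IsSSYT n lam T ∧ RowBound n lam β T} =
      {T | IsSSYT n lam T ∧ RowBound n lam β' T} := by
    ext T
    simp only [Set.mem_setOf_eq]
    exact and_congr_right fun hT => (key T hT).trans (key' T hT).symm
  refine ⟨h1, h2, ?_⟩
  have h3 : {T : ℕ → ℕ → ℕ | IsSSYT n lam T ∧ RowBound n lam β T ∧ NormalizedTab n lam T} =
      {T : ℕ → ℕ → ℕ | IsSSYT n lam T ∧
        RowBound n lam (coreT (Rlam n lam) n β) T ∧ NormalizedTab n lam T} := by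
    ext T
    simp only [Set.mem_setOf_eq]
    constructor
    · rintro ⟨a, b, c⟩
      exact ⟨a, (key T a).mp b, c⟩
    · rintro ⟨a, b, c⟩
      exact ⟨a, (key T a).mpr b, c⟩
  rw [rowBoundSum, rowBoundSum, h3]
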